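/- arXiv:2112.00126 — 3 statements merged into one kernel-verified Lean document; each statement's English description precedes it below -/
import Mathlib

section
/- Let Y be a measurable space, κ a Markov kernel on Y, μ0 a probability measure on Y, V : Y → [1, ∞) measurable with ∫ V dμ0 < ∞, f : Y → ℝ measurable, ℓ ∈ ℝ, and constants K ≥ 0 and ρ ∈ (0,1) such that |(κ^n f)(y) − ℓ| ≤ K ρ^n V(y) for all n ≥ 0 and all y ∈ Y. Then for every integer N ≥ 1, | (1/N) Σ_{n=0}^{N−1} ∫ (κ^n f) dμ0 − ℓ | ≤ (K/N) (∫ V dμ0) (1 − ρ^N)/(1 − ρ) ≤ (K/N) (∫ V dμ0) / (1 − ρ). -/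
/-!
Integrating the pointwise bound `|κⁿf - ℓ| ≤ K ρⁿ V` against `μ0` bounds the bias of each
term by `K ρⁿ ∫ V dμ0`; averaging over `n < N` and summing the geometric series gives the claim.
-/

open MeasureTheory ProbabilityTheory

section IntegralBound

variable {Y : Type*} [MeasurableSpace Y] {μ : Measure Y} {g V : Y → ℝ} {ℓ c : ℝ}

theorem integrable_of_abs_sub_le_mul [IsFiniteMeasure μ] (hg : AEStronglyMeasurable g μ)
    (hV : Integrable V μ) (hbound : ∀ y, |g y - ℓ| ≤ c * V y) : Integrable g μ := by
  have hdev : Integrable (fun y => g y - ℓ) μ :=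
    (hV.const_mul c).mono' (hg.sub aestronglyMeasurable_const)
      (Filter.Eventually.of_forall hbound)
  exact (hdev.add (integrable_const ℓ)).congr
    (Filter.Eventually.of_forall fun y => sub_add_cancel (g y) ℓ)

theorem abs_integral_sub_le_mul_integral [IsProbabilityMeasure μ]
    (hg : AEStronglyMeasurable g μ) (hV : Integrable V μ) (hbound : ∀ y, |g y - ℓ| ≤ c * V y) :
    |∫ y, g y ∂μ - ℓ| ≤ c * ∫ y, V y ∂μ := by
  have hgint := integrable_of_abs_sub_le_mul hg hV hbound
  calc |∫ y, g y ∂μ - ℓ| = |∫ y, (g y - ℓ) ∂μ| := by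
        rw [integral_sub hgint (integrable_const ℓ), integral_const, probReal_univ, one_smul]
    _ ≤ ∫ y, |g y - ℓ| ∂μ := abs_integral_le_integral_abs
    _ ≤ ∫ y, c * V y ∂μ :=
        integral_mono (hgint.sub (integrable_const ℓ)).abs (hV.const_mul c) hbound
    _ = c * ∫ y, V y ∂μ := integral_const_mul c _

end IntegralBound

theorem abs_average_sub_le_of_abs_sub_le_geometric {a : ℕ → ℝ} {ℓ C ρ : ℝ} (hρ : ρ ≠ 1)
    (ha : ∀ n, |a n - ℓ| ≤ C * ρ ^ n) {N : ℕ} (hN : N ≠ 0) :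
    |(1 / N : ℝ) * ∑ n ∈ Finset.range N, a n - ℓ| ≤ C / N * (1 - ρ ^ N) / (1 - ρ) := by
  have hNpos : (0 : ℝ) < N := by positivity
  have hcenter : (1 / N : ℝ) * ∑ n ∈ Finset.range N, a n - ℓ
      = (1 / N : ℝ) * ∑ n ∈ Finset.range N, (a n - ℓ) := by
    rw [Finset.sum_sub_distrib, Finset.sum_const, Finset.card_range, nsmul_eq_mul]
    field_simp
  have hgeom : ∑ n ∈ Finset.range N, ρ ^ n = (1 - ρ ^ N) / (1 - ρ) := by
    rw [eq_div_iff (sub_ne_zero.mpr hρ.symm), geom_sum_mul_neg]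
  rw [hcenter, abs_mul, abs_of_pos (by positivity)]
  calc (1 / N : ℝ) * |∑ n ∈ Finset.range N, (a n - ℓ)|
      ≤ (1 / N : ℝ) * ∑ n ∈ Finset.range N, C * ρ ^ n := by
        gcongr
        exact (Finset.abs_sum_le_sum_abs _ _).trans (Finset.sum_le_sum fun n _ => ha n)
    _ = C / N * (1 - ρ ^ N) / (1 - ρ) := by
        rw [← Finset.mul_sum, hgeom]
        ring

theorem mul_one_sub_pow_div_le {A ρ : ℝ} (hA : 0 ≤ A) (hρ0 : 0 ≤ ρ) (hρ1 : ρ < 1) (N : ℕ) :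
    A * (1 - ρ ^ N) / (1 - ρ) ≤ A / (1 - ρ) := by
  gcongr
  exact mul_le_of_le_one_right hA (by linarith [pow_nonneg hρ0 N])

theorem stmt8_general {Y : Type*} [MeasurableSpace Y]
    (μ0 : Measure Y) [IsProbabilityMeasure μ0]
    (V : Y → ℝ) (hV1 : ∀ y, 1 ≤ V y)
    (hVint : Integrable V μ0)
    (f : Y → ℝ) (ℓ K ρ : ℝ) (hK : 0 ≤ K)
    (hρ : ρ ∈ Set.Ioo (0 : ℝ) 1)
    (P : (Y → ℝ) → Y → ℝ)
    (hmeas : ∀ n : ℕ, AEStronglyMeasurable (P^[n] f) μ0)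
    (hbound : ∀ (n : ℕ) (y : Y), |(P^[n] f) y - ℓ| ≤ K * ρ ^ n * V y) :
    ∀ N : ℕ, 1 ≤ N →
      (|(1 / N : ℝ) * ∑ n ∈ Finset.range N, ∫ y, (P^[n] f) y ∂μ0 - ℓ|
          ≤ K / N * (∫ y, V y ∂μ0) * (1 - ρ ^ N) / (1 - ρ))
      ∧ (K / N * (∫ y, V y ∂μ0) * (1 - ρ ^ N) / (1 - ρ)
          ≤ K / N * (∫ y, V y ∂μ0) / (1 - ρ)) := by
  intro N hN
  obtain ⟨hρ0, hρ1⟩ := hρ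
  have hterm : ∀ n, |∫ y, (P^[n] f) y ∂μ0 - ℓ| ≤ K * (∫ y, V y ∂μ0) * ρ ^ n := fun n => by
    have := abs_integral_sub_le_mul_integral (hmeas n) hVint (hbound n)
    linarith
  have hVnonneg : 0 ≤ ∫ y, V y ∂μ0 := integral_nonneg fun y => zero_le_one.trans (hV1 y)
  constructor
  · have := abs_average_sub_le_of_abs_sub_le_geometric hρ1.ne hterm (by omega : N ≠ 0)
    rwa [mul_div_right_comm K] at this
  · exact mul_one_sub_pow_div_le (by positivity) hρ0.le hρ1 N

/-- Finite-integration-time bias bound for ergodic averages: if the Markov kernel `κ`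
(acting on functions by `(P φ)(y) = ∫ φ dκ(y,·)`, so that `κ^n f = P^[n] f`) satisfies
the geometric ergodicity bound `|(κ^n f)(y) − ℓ| ≤ K ρ^n V(y)` with Lyapunov weight
`V ≥ 1`, `∫ V dμ0 < ∞`, then for every `N ≥ 1`,
`|(1/N) Σ_{n<N} ∫ κ^n f dμ0 − ℓ| ≤ (K/N)(∫ V dμ0)(1 − ρ^N)/(1 − ρ) ≤ (K/N)(∫ V dμ0)/(1 − ρ)`. -/
theorem stmt8 {Y : Type*} [MeasurableSpace Y] (κ : Kernel Y Y) [IsMarkovKernel κ]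
    (μ0 : Measure Y) [IsProbabilityMeasure μ0]
    (V : Y → ℝ) (hVmeas : Measurable V) (hV1 : ∀ y, 1 ≤ V y)
    (hVint : Integrable V μ0)
    (f : Y → ℝ) (hf : Measurable f) (ℓ K ρ : ℝ) (hK : 0 ≤ K)
    (hρ : ρ ∈ Set.Ioo (0 : ℝ) 1)
    (P : (Y → ℝ) → Y → ℝ) (hP : ∀ (φ : Y → ℝ) (y : Y), P φ y = ∫ x, φ x ∂(κ y))
    (hmeas : ∀ n : ℕ, AEStronglyMeasurable (P^[n] f) μ0)
    (hbound : ∀ (n : ℕ) (y : Y), |(P^[n] f) y - ℓ| ≤ K * ρ ^ n * V y) :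
    ∀ N : ℕ, 1 ≤ N →
      (|(1 / N : ℝ) * ∑ n ∈ Finset.range N, ∫ y, (P^[n] f) y ∂μ0 - ℓ|
          ≤ K / N * (∫ y, V y ∂μ0) * (1 - ρ ^ N) / (1 - ρ))
      ∧ (K / N * (∫ y, V y ∂μ0) * (1 - ρ ^ N) / (1 - ρ)
          ≤ K / N * (∫ y, V y ∂μ0) / (1 - ρ)) :=
  stmt8_general μ0 V hV1 hVint f ℓ K ρ hK hρ P hmeas hbound
end

section
/- Let Y be a measurable space, κ a Markov kernel on Y, f : Y → ℝ measurable, ℓ ∈ ℝ, h > 0, V : Y → [1, ∞) measurable with (κ V)(y) < ∞ for every y, and constants A ≥ 0, ρ ∈ (0,1) such that |(κ^n f)(y) − ℓ| ≤ A ρ^n V(y) for all n ≥ 0 and all y ∈ Y. Then the series f̂(y) := h Σ_{n=0}^∞ ( (κ^n f)(y) − ℓ ) converges absolutely for every y, satisfies |f̂(y)| ≤ (A h / (1 − ρ)) V(y), and solves the discrete Poisson equation f̂(y) − (κ f̂)(y) = h ( f(y) − ℓ ) for every y ∈ Y. -/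
open MeasureTheory ProbabilityTheory

/-!
The geometric bound makes `Σₙ |κⁿ f − ℓ|` converge pointwise, with sum at most `A V / (1 − ρ)`,
and, since `κ V < ∞`, also makes `Σₙ ∫ |κⁿ f − ℓ| dκ(y, ·)` converge. The integral against
`κ(y, ·)` may then be taken termwise; as `κ` is Markov it maps `κⁿ f − ℓ` to `κⁿ⁺¹ f − ℓ`, so
`f̂ − κ f̂` telescopes to its first term `h (f − ℓ)`.
-/

lemma hasSum_mul_geometric_mul {ρ : ℝ} (hρ₀ : 0 ≤ ρ) (hρ₁ : ρ < 1) (A c : ℝ) :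
    HasSum (fun n : ℕ => A * ρ ^ n * c) (A * (1 - ρ)⁻¹ * c) :=
  ((hasSum_geometric_of_lt_one hρ₀ hρ₁).mul_left A).mul_right c

section

variable {Y E : Type*} [MeasurableSpace Y] [NormedAddCommGroup E] [NormedSpace ℝ E]

lemma tsum_sub_integral_tsum_eq_of_succ_eq_integral [CompleteSpace E] {μ : Measure Y}
    {g : ℕ → Y → E} {y : Y} (hint : ∀ n, Integrable (g n) μ)
    (hsum : Summable fun n => ∫ x, ‖g n x‖ ∂μ) (hy : Summable fun n => g n y)
    (hsucc : ∀ n, g (n + 1) y = ∫ x, g n x ∂μ) :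
    ∑' n, g n y - ∫ x, ∑' n, g n x ∂μ = g 0 y := by
  rw [← integral_tsum_of_summable_integral_norm hint hsum, hy.tsum_eq_zero_add]
  simp only [← hsucc, add_sub_cancel_right]

variable (κ : Kernel Y Y) {P : (Y → E) → Y → E} (hP : ∀ φ y, P φ y = ∫ x, φ x ∂(κ y))
include hP

lemma stronglyMeasurable_iterate_of_eq_integral {f : Y → E} (hf : StronglyMeasurable f)
    (n : ℕ) : StronglyMeasurable (P^[n] f) := by
  induction n with
  | zero => exact hf
  | succ n ih =>
    rw [Function.iterate_succ_apply', show P (P^[n] f) = _ from funext (hP _)]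
    exact ih.integral_kernel

lemma iterate_succ_sub_eq_integral_sub [CompleteSpace E] [IsMarkovKernel κ] {f : Y → E}
    {n : ℕ} {y : Y} {c : E} (hint : Integrable (fun x => P^[n] f x - c) (κ y)) :
    P^[n + 1] f y - c = ∫ x, P^[n] f x - c ∂(κ y) := by
  have hint' : Integrable (P^[n] f) (κ y) :=
    integrable_add_const_iff.mp (by simpa only [sub_eq_add_neg] using hint)
  rw [Function.iterate_succ_apply', hP, integral_sub hint' (integrable_const c), integral_const,
    probReal_univ, one_smul]

end

theorem stmt14_general {Y : Type*} [MeasurableSpace Y] (κ : Kernel Y Y) [IsMarkovKernel κ]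
    (f : Y → ℝ) (hf : Measurable f) (ℓ h : ℝ) (hh : 0 < h)
    (V : Y → ℝ)
    (hVκ : ∀ y, Integrable V (κ y))
    (A ρ : ℝ) (hρ : ρ ∈ Set.Ioo (0 : ℝ) 1)
    (P : (Y → ℝ) → Y → ℝ) (hP : ∀ (φ : Y → ℝ) (y : Y), P φ y = ∫ x, φ x ∂(κ y))
    (hbound : ∀ (n : ℕ) (y : Y), |(P^[n] f) y - ℓ| ≤ A * ρ ^ n * V y) :
    ∀ y : Y,
      Summable (fun n : ℕ => |(P^[n] f) y - ℓ|)
      ∧ |h * ∑' n : ℕ, ((P^[n] f) y - ℓ)| ≤ A * h / (1 - ρ) * V y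
      ∧ (h * ∑' n : ℕ, ((P^[n] f) y - ℓ))
            - ∫ x, (h * ∑' n : ℕ, ((P^[n] f) x - ℓ)) ∂(κ y)
          = h * (f y - ℓ) := by
  obtain ⟨hρ₀, hρ₁⟩ := hρ
  have hgeom := hasSum_mul_geometric_mul hρ₀.le hρ₁ A
  have hmeas n := stronglyMeasurable_iterate_of_eq_integral κ hP hf.stronglyMeasurable n
  have hint : ∀ n y, Integrable (fun x => P^[n] f x - ℓ) (κ y) := fun n y =>
    ((hVκ y).const_mul (A * ρ ^ n)).mono' ((hmeas n).aestronglyMeasurable.sub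
      aestronglyMeasurable_const) (ae_of_all _ (hbound n))
  have hsum_int : ∀ y, Summable fun n => ∫ x, ‖P^[n] f x - ℓ‖ ∂(κ y) := fun y =>
    (hgeom _).summable.of_nonneg_of_le (fun n => integral_nonneg fun _ => norm_nonneg _)
      fun n => (integral_mono (hint n y).norm ((hVκ y).const_mul _) (hbound n)).trans_eq
        (integral_const_mul _ _)
  intro y
  have hsum : Summable fun n => |P^[n] f y - ℓ| :=
    (hgeom (V y)).summable.of_nonneg_of_le (fun _ => abs_nonneg _) (hbound · y)
  refine ⟨hsum, ?_, ?_⟩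
  · calc |h * ∑' n, (P^[n] f y - ℓ)| = h * |∑' n, (P^[n] f y - ℓ)| := by
          rw [abs_mul, abs_of_pos hh]
      _ ≤ h * (A * (1 - ρ)⁻¹ * V y) := by
          gcongr
          exact tsum_of_norm_bounded (f := fun n => P^[n] f y - ℓ) (hgeom (V y)) (hbound · y)
      _ = A * h / (1 - ρ) * V y := by ring
  · rw [integral_const_mul, ← mul_sub, tsum_sub_integral_tsum_eq_of_succ_eq_integral (hint · y)
      (hsum_int y) hsum.of_abs fun n => iterate_succ_sub_eq_integral_sub κ hP (hint n y)]
    rfl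

/-- Construction of the solution of the discrete Poisson equation from geometric ergodicity:
if `|(κ^n f)(y) − ℓ| ≤ A ρ^n V(y)` (with `κ^n f = P^[n] f` for the action
`(P φ)(y) = ∫ φ dκ(y,·)`), then the series `f̂(y) = h Σ_{n≥0} ((κ^n f)(y) − ℓ)` converges
absolutely, satisfies `|f̂(y)| ≤ (A h/(1 − ρ)) V(y)`, and solves
`f̂(y) − (κ f̂)(y) = h (f(y) − ℓ)` for every `y`. -/
theorem stmt14 {Y : Type*} [MeasurableSpace Y] (κ : Kernel Y Y) [IsMarkovKernel κ]
    (f : Y → ℝ) (hf : Measurable f) (ℓ h : ℝ) (hh : 0 < h)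
    (V : Y → ℝ) (hVmeas : Measurable V) (hV1 : ∀ x, 1 ≤ V x)
    (hVκ : ∀ y, Integrable V (κ y))
    (A ρ : ℝ) (hA : 0 ≤ A) (hρ : ρ ∈ Set.Ioo (0 : ℝ) 1)
    (P : (Y → ℝ) → Y → ℝ) (hP : ∀ (φ : Y → ℝ) (y : Y), P φ y = ∫ x, φ x ∂(κ y))
    (hbound : ∀ (n : ℕ) (y : Y), |(P^[n] f) y - ℓ| ≤ A * ρ ^ n * V y) :
    ∀ y : Y,
      Summable (fun n : ℕ => |(P^[n] f) y - ℓ|)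
      ∧ |h * ∑' n : ℕ, ((P^[n] f) y - ℓ)| ≤ A * h / (1 - ρ) * V y
      ∧ (h * ∑' n : ℕ, ((P^[n] f) y - ℓ))
            - ∫ x, (h * ∑' n : ℕ, ((P^[n] f) x - ℓ)) ∂(κ y)
          = h * (f y - ℓ) :=
  stmt14_general κ f hf ℓ h hh V hVκ A ρ hρ P hP hbound
end

section
/- Let (Ω, F, (F_n)_{n∈ℕ}, P) be a filtered probability space, Y a measurable space, κ a Markov kernel on Y, h > 0, and (y^n)_{n≥0} an adapted Y-valued process. Let f : Y → ℝ be measurable, c ∈ ℝ, and f̂ : Y → ℝ measurable with (κ|f̂|)(x) < ∞ for all x and f̂ − κ f̂ = h (f − c) pointwise. Assume E[f̂(y^{n+1}) | F_n] = (κ f̂)(y^n) a.s. for all n, that f̂(y^n) and (κ f̂)(y^n) are square-integrable for all n, and that (z^n)_{n≥0} is a square-integrable (F_n)-martingale with z^0 = 0. Then for every N ≥ 1, E[ ( (1/N) Σ_{n=0}^{N−1} ( f(y^n) − c ) ) z^N ] = (1/(N h)) Σ_{n=0}^{N−1} E[ ( f̂(y^{n+1}) − (κ f̂)(y^n) ) (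 z^{n+1} − z^n ) ] + (1/(N h)) E[ ( f̂(y^0) − f̂(y^N) ) z^N ]. -/
/-!
Summing the Poisson equation along the chain, `h (f(yⁿ) − c) = ΔMₙ + f̂(yⁿ) − f̂(yⁿ⁺¹)`,
expresses `h Σₙ (f(yⁿ) − c)` as the sum of the martingale increments `ΔMₙ` plus the boundary
term `f̂(y⁰) − f̂(y^N)`. It then remains to replace `z^N` by `zⁿ⁺¹ − zⁿ` against `ΔMₙ`:
`E[ΔMₙ z^N] = E[ΔMₙ zⁿ⁺¹]` because `ΔMₙ` is `ℱₙ₊₁`-measurable and `z` is a martingale, and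
`E[ΔMₙ zⁿ] = 0` because `zⁿ` is `ℱₙ`-measurable and `E[ΔMₙ | ℱₙ] = 0`.
-/

open MeasureTheory ProbabilityTheory Finset

section Orthogonality

variable {Ω : Type*} {m m0 : MeasurableSpace Ω} {μ : Measure Ω}

lemma integral_mul_condExp_of_stronglyMeasurable (hm : m ≤ m0) [SigmaFinite (μ.trim hm)]
    {g X : Ω → ℝ} (hg : StronglyMeasurable[m] g) (hgX : Integrable (g * X) μ)
    (hX : Integrable X μ) :
    ∫ ω, g ω * μ[X|m] ω ∂μ = ∫ ω, g ω * X ω ∂μ := by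
  calc ∫ ω, g ω * μ[X|m] ω ∂μ = ∫ ω, μ[g * X|m] ω ∂μ :=
        integral_congr_ae (condExp_mul_of_stronglyMeasurable_left hg hgX hX).symm
    _ = ∫ ω, g ω * X ω ∂μ := integral_condExp hm

lemma integral_mul_eq_zero_of_condExp_eq_zero (hm : m ≤ m0) [SigmaFinite (μ.trim hm)]
    {g X : Ω → ℝ} (hg : StronglyMeasurable[m] g) (hgX : Integrable (g * X) μ)
    (hX : Integrable X μ) (hX0 : μ[X|m] =ᵐ[μ] 0) :
    ∫ ω, g ω * X ω ∂μ = 0 := by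
  calc ∫ ω, g ω * X ω ∂μ = ∫ ω, g ω * μ[X|m] ω ∂μ :=
        (integral_mul_condExp_of_stronglyMeasurable hm hg hgX hX).symm
    _ = ∫ _, (0 : ℝ) ∂μ := integral_congr_ae <| by
        filter_upwards [hX0] with ω hω
        simp [hω]
    _ = 0 := integral_zero _ _

lemma condExp_sub_ae_eq_zero (hm : m ≤ m0) [SigmaFinite (μ.trim hm)] {F G : Ω → ℝ}
    (hF : Integrable F μ) (hG : StronglyMeasurable[m] G) (hGi : Integrable G μ)
    (hFG : μ[F|m] =ᵐ[μ] G) :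
    μ[F - G|m] =ᵐ[μ] 0 := by
  refine (condExp_sub hF hGi m).trans ?_
  filter_upwards [hFG] with ω hω
  simp [hω, condExp_of_stronglyMeasurable hm hG hGi]

lemma MeasureTheory.Martingale.integral_mul_eq_of_le [IsFiniteMeasure μ] {ι : Type*}
    [Preorder ι] {ℱ : Filtration ι m0} {z : ι → Ω → ℝ} (hz : Martingale z ℱ μ) {i j : ι}
    (hij : i ≤ j) {g : Ω → ℝ} (hg : StronglyMeasurable[ℱ i] g) (hgz : Integrable (g * z j) μ) :
    ∫ ω, g ω * z j ω ∂μ = ∫ ω, g ω * z i ω ∂μ := by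
  rw [← integral_mul_condExp_of_stronglyMeasurable (ℱ.le i) hg hgz (hz.integrable j)]
  refine integral_congr_ae ?_
  filter_upwards [hz.condExp_ae_eq hij] with ω hω
  rw [hω]

lemma MeasureTheory.Martingale.integral_mul_eq_integral_mul_sub [IsFiniteMeasure μ]
    {ℱ : Filtration ℕ m0} {z : ℕ → Ω → ℝ} (hz : Martingale z ℱ μ)
    (hzL2 : ∀ n, MemLp (z n) 2 μ) {n N : ℕ} (hnN : n < N) {X : Ω → ℝ}
    (hX : StronglyMeasurable[ℱ (n + 1)] X) (hXL2 : MemLp X 2 μ) (hX0 : μ[X|ℱ n] =ᵐ[μ] 0) :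
    ∫ ω, X ω * z N ω ∂μ = ∫ ω, X ω * (z (n + 1) ω - z n ω) ∂μ := by
  have hXz : ∀ k, Integrable (fun ω => X ω * z k ω) μ := fun k =>
    hXL2.integrable_mul (hzL2 k)
  have hXzn : ∫ ω, X ω * z n ω ∂μ = 0 := by
    simp_rw [mul_comm (X _)]
    exact integral_mul_eq_zero_of_condExp_eq_zero (ℱ.le n) (hz.stronglyMeasurable n)
      ((hzL2 n).integrable_mul hXL2) (hXL2.integrable one_le_two) hX0
  simp_rw [mul_sub]
  rw [integral_sub (hXz _) (hXz _), hXzn, sub_zero]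
  exact hz.integral_mul_eq_of_le hnN hX (hXz N)

end Orthogonality

lemma mul_sum_range_eq_sum_add_sub_of_sub_eq_mul {u v w : ℕ → ℝ} {h : ℝ}
    (huv : ∀ n, u n - v n = h * w n) (N : ℕ) :
    h * ∑ n ∈ range N, w n = ∑ n ∈ range N, (u (n + 1) - v n) + (u 0 - u N) := by
  have hw : ∀ n, h * w n = (u (n + 1) - v n) + (u n - u (n + 1)) := fun n => by
    rw [← huv]; ring
  rw [mul_sum, sum_congr rfl fun n _ => hw n, sum_add_distrib, sum_range_sub']

lemma condExp_comp_succ_sub_integral_kernel_eq_zero {Ω Y : Type*} {m0 : MeasurableSpace Ω}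
    [MeasurableSpace Y] {μ : Measure Ω} [IsFiniteMeasure μ] {ℱ : Filtration ℕ m0}
    {κ : Kernel Y Y} {y : ℕ → Ω → Y} (hy : ∀ n, Measurable[ℱ n] (y n)) {fhat : Y → ℝ}
    (hfhat : Measurable fhat) {n : ℕ}
    (hcond : μ[fun ω => fhat (y (n + 1) ω) | ℱ n] =ᵐ[μ] fun ω => ∫ x, fhat x ∂(κ (y n ω)))
    (hint : Integrable (fun ω => fhat (y (n + 1) ω)) μ)
    (hκint : Integrable (fun ω => ∫ x, fhat x ∂(κ (y n ω))) μ) :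
    μ[fun ω => fhat (y (n + 1) ω) - ∫ x, fhat x ∂(κ (y n ω)) | ℱ n] =ᵐ[μ] 0 :=
  condExp_sub_ae_eq_zero (ℱ.le n) hint
    (hfhat.stronglyMeasurable.integral_kernel.comp_measurable (hy n)) hκint hcond

theorem stmt15_general {Ω Y : Type*} {m0 : MeasurableSpace Ω} [MeasurableSpace Y]
    (μ : Measure Ω) [IsProbabilityMeasure μ] (ℱ : Filtration ℕ m0)
    (κ : Kernel Y Y) (h : ℝ) (hh : 0 < h)
    (y : ℕ → Ω → Y) (hy : ∀ n, @Measurable Ω Y (ℱ n) _ (y n))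
    (f : Y → ℝ) (c : ℝ)
    (fhat : Y → ℝ) (hfhat : Measurable fhat)
    (hPoisson : ∀ x, fhat x - ∫ z, fhat z ∂(κ x) = h * (f x - c))
    (hcond : ∀ n, μ[fun ω => fhat (y (n + 1) ω) | ℱ n]
        =ᵐ[μ] fun ω => ∫ z, fhat z ∂(κ (y n ω)))
    (hL2a : ∀ n, MemLp (fun ω => fhat (y n ω)) 2 μ)
    (hL2b : ∀ n, MemLp (fun ω => ∫ z, fhat z ∂(κ (y n ω))) 2 μ)
    (z : ℕ → Ω → ℝ) (hz : Martingale z ℱ μ)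
    (hzL2 : ∀ n, MemLp (z n) 2 μ) :
    ∀ N : ℕ, 1 ≤ N →
      ∫ ω, ((1 / N : ℝ) * ∑ n ∈ Finset.range N, (f (y n ω) - c)) * z N ω ∂μ
        = 1 / (N * h) * ∑ n ∈ Finset.range N,
            ∫ ω, (fhat (y (n + 1) ω) - ∫ x, fhat x ∂(κ (y n ω)))
                * (z (n + 1) ω - z n ω) ∂μ
          + 1 / (N * h) * ∫ ω, (fhat (y 0 ω) - fhat (y N ω)) * z N ω ∂μ := by
  intro N _
  set ΔM : ℕ → Ω → ℝ := fun n ω => fhat (y (n + 1) ω) - ∫ x, fhat x ∂(κ (y n ω))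
  have hΔL2 : ∀ n, MemLp (ΔM n) 2 μ := fun n => (hL2a (n + 1)).sub (hL2b n)
  have hpointwise : ∀ ω, (1 / N : ℝ) * ∑ n ∈ range N, (f (y n ω) - c)
      = 1 / (N * h) * (∑ n ∈ range N, ΔM n ω + (fhat (y 0 ω) - fhat (y N ω))) := by
    intro ω
    rw [← mul_sum_range_eq_sum_add_sub_of_sub_eq_mul (fun n => hPoisson (y n ω)) N]
    field_simp [hh.ne']
  have hΔMz : ∀ n ∈ range N, ∫ ω, ΔM n ω * z N ω ∂μ
      = ∫ ω, ΔM n ω * (z (n + 1) ω - z n ω) ∂μ := fun n hn =>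
    hz.integral_mul_eq_integral_mul_sub hzL2 (mem_range.1 hn)
      ((hfhat.stronglyMeasurable.comp_measurable (hy (n + 1))).sub
        (hfhat.stronglyMeasurable.integral_kernel.comp_measurable
          ((hy n).mono (ℱ.mono n.le_succ) le_rfl)))
      (hΔL2 n) (condExp_comp_succ_sub_integral_kernel_eq_zero hy hfhat (hcond n)
        ((hL2a (n + 1)).integrable one_le_two) ((hL2b n).integrable one_le_two))
  have hΔMz_int : ∀ n ∈ range N, Integrable (fun ω => ΔM n ω * z N ω) μ := fun n _ =>
    (hΔL2 n).integrable_mul (hzL2 N)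
  have hboundary_int : Integrable (fun ω => (fhat (y 0 ω) - fhat (y N ω)) * z N ω) μ :=
    ((hL2a 0).sub (hL2a N)).integrable_mul (hzL2 N)
  simp_rw [hpointwise, mul_assoc, integral_const_mul, add_mul, sum_mul, ← mul_add]
  rw [integral_add (integrable_finsetSum _ hΔMz_int) hboundary_int,
    integral_finsetSum _ hΔMz_int, sum_congr rfl hΔMz]

/-- Key decomposition underlying the bias and variance analysis of martingale product
estimators: if `f̂` solves the discrete Poisson equation `f̂ − κ f̂ = h (f − c)`, the chain
satisfies the one-step Markov property for `f̂`, `f̂(y^n)` and `(κ f̂)(y^n)` are square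
integrable, and `z` is a square-integrable martingale with `z^0 = 0`, then for every
`N ≥ 1`, `E[((1/N) Σ_{n<N} (f(y^n) − c)) z^N]
  = (1/(Nh)) Σ_{n<N} E[(f̂(y^{n+1}) − (κ f̂)(y^n))(z^{n+1} − z^n)]
    + (1/(Nh)) E[(f̂(y^0) − f̂(y^N)) z^N]`. -/
theorem stmt15 {Ω Y : Type*} {m0 : MeasurableSpace Ω} [MeasurableSpace Y]
    (μ : Measure Ω) [IsProbabilityMeasure μ] (ℱ : Filtration ℕ m0)
    (κ : Kernel Y Y) [IsMarkovKernel κ] (h : ℝ) (hh : 0 < h)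
    (y : ℕ → Ω → Y) (hy : ∀ n, @Measurable Ω Y (ℱ n) _ (y n))
    (f : Y → ℝ) (hf : Measurable f) (c : ℝ)
    (fhat : Y → ℝ) (hfhat : Measurable fhat)
    (hfhatint : ∀ x, Integrable fhat (κ x))
    (hPoisson : ∀ x, fhat x - ∫ z, fhat z ∂(κ x) = h * (f x - c))
    (hcond : ∀ n, μ[fun ω => fhat (y (n + 1) ω) | ℱ n]
        =ᵐ[μ] fun ω => ∫ z, fhat z ∂(κ (y n ω)))
    (hL2a : ∀ n, MemLp (fun ω => fhat (y n ω)) 2 μ)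
    (hL2b : ∀ n, MemLp (fun ω => ∫ z, fhat z ∂(κ (y n ω))) 2 μ)
    (z : ℕ → Ω → ℝ) (hz : Martingale z ℱ μ) (hz0 : ∀ ω, z 0 ω = 0)
    (hzL2 : ∀ n, MemLp (z n) 2 μ) :
    ∀ N : ℕ, 1 ≤ N →
      ∫ ω, ((1 / N : ℝ) * ∑ n ∈ Finset.range N, (f (y n ω) - c)) * z N ω ∂μ
        = 1 / (N * h) * ∑ n ∈ Finset.range N,
            ∫ ω, (fhat (y (n + 1) ω) - ∫ x, fhat x ∂(κ (y n ω)))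
                * (z (n + 1) ω - z n ω) ∂μ
          + 1 / (N * h) * ∫ ω, (fhat (y 0 ω) - fhat (y N ω)) * z N ω ∂μ :=
  stmt15_general μ ℱ κ h hh y hy f c fhat hfhat hPoisson hcond hL2a hL2b z hz hzL2
end
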